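/- arXiv:2411.05765 — 3 statements merged into one kernel-verified Lean document; each statement's English description precedes it below -/
import Mathlib

section
/- For any interval I ⊆ J, the evolution family Φ has uniform bounded h-decay on I if and only if there exist constants K₀ ≥ 1 and β ≥ 0 such that ‖Φ(t,s)‖ ≤ K₀·(h(s)/h(t))^β for all s ≥ t with t, s ∈ I. -/
open Set

noncomputable section

/-- The operation `t ∗ s := h⁻¹ (h t · h s)` on `J`. -/
def star (h hinv : ℝ → ℝ) (t s : ℝ) : ℝ := hinv (h t * h s)

/-- The unit element `e∗ := h⁻¹ 1`. -/
def estar (hinv : ℝ → ℝ) : ℝ := hinv 1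

/-- The inverse `t^{∗-1} := h⁻¹ (1 / h t)`. -/
def sinv (h hinv : ℝ → ℝ) (t : ℝ) : ℝ := hinv (1 / h t)

/-- The absolute value `|t|∗ := t` if `e∗ ≤ t` and `t^{∗-1}` otherwise. -/
def absStar (h hinv : ℝ → ℝ) (t : ℝ) : ℝ := if estar hinv ≤ t then t else sinv h hinv t

/-- `h : J → (0,∞)` is a growth rate: a strictly increasing homeomorphism of
`J = (a₀,∞)` (or `J = ℝ`) onto `(0,∞)`, with (two-sided) inverse `hinv`. -/
structure GrowthRate (J : Set ℝ) (h hinv : ℝ → ℝ) : Prop where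
  J_eq : (∃ a₀ : ℝ, J = Set.Ioi a₀) ∨ J = Set.univ
  mono : StrictMonoOn h J
  cont : ContinuousOn h J
  pos : ∀ t ∈ J, 0 < h t
  inv_left : ∀ t ∈ J, hinv (h t) = t
  inv_mem : ∀ y ∈ Set.Ioi (0:ℝ), hinv y ∈ J
  inv_right : ∀ y ∈ Set.Ioi (0:ℝ), h (hinv y) = y
  inv_cont : ContinuousOn hinv (Set.Ioi 0)

variable {E : Type*} [NormedAddCommGroup E] [NormedSpace ℝ E]

/-- An evolution family on `J`: `Φ t t = I` and `Φ t u ∘ Φ u s = Φ t s`. -/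
def IsEvolutionFamily (J : Set ℝ) (Φ : ℝ → ℝ → (E →L[ℝ] E)) : Prop :=
  (∀ t ∈ J, Φ t t = 1) ∧ (∀ t ∈ J, ∀ u ∈ J, ∀ s ∈ J, Φ t u * Φ u s = Φ t s)

/-- `Φ` has a uniform `h`-dichotomy on `I` with projections `P` and constants `K, α`. -/
def HasUHDWith (I : Set ℝ) (h : ℝ → ℝ) (Φ : ℝ → ℝ → (E →L[ℝ] E))
    (P : ℝ → (E →L[ℝ] E)) (K α : ℝ) : Prop :=
  (∀ t ∈ I, P t * P t = P t) ∧
  (∀ t ∈ I, ∀ s ∈ I, P t * Φ t s = Φ t s * P s) ∧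
  (∀ s ∈ I, ∀ t ∈ I, s ≤ t → ‖Φ t s * P s‖ ≤ K * (h t / h s) ^ (-α)) ∧
  (∀ s ∈ I, ∀ t ∈ I, t ≤ s → ‖Φ t s * (1 - P s)‖ ≤ K * (h s / h t) ^ (-α))

/-- `Φ` has a uniform `h`-dichotomy on `I`. -/
def HasUHD (I : Set ℝ) (h : ℝ → ℝ) (Φ : ℝ → ℝ → (E →L[ℝ] E)) : Prop :=
  ∃ K ≥ (1:ℝ), ∃ α > (0:ℝ), ∃ P : ℝ → (E →L[ℝ] E), HasUHDWith I h Φ P K α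

/-- Uniform bounded `h`-growth on `I`: every solution satisfies
`|x t| ≤ C |x s|` for `s ∈ I` and `t ∈ [s, s∗T] ∩ I`. -/
def UnifBoundedHGrowth (J I : Set ℝ) (h hinv : ℝ → ℝ) (Φ : ℝ → ℝ → (E →L[ℝ] E)) : Prop :=
  ∃ T > estar hinv, ∃ C ≥ (1:ℝ), ∀ s₀ ∈ J, ∀ ξ : E, ∀ s ∈ I, ∀ t ∈ I,
    s ≤ t → t ≤ star h hinv s T → ‖(Φ t s₀) ξ‖ ≤ C * ‖(Φ s s₀) ξ‖

/-- Uniform bounded `h`-decay on `I`: every solution satisfies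
`|x t| ≤ C |x s|` for `s ∈ I` and `t ∈ [s∗T^{∗-1}, s] ∩ I`. -/
def UnifBoundedHDecay (J I : Set ℝ) (h hinv : ℝ → ℝ) (Φ : ℝ → ℝ → (E →L[ℝ] E)) : Prop :=
  ∃ T > estar hinv, ∃ C ≥ (1:ℝ), ∀ s₀ ∈ J, ∀ ξ : E, ∀ s ∈ I, ∀ t ∈ I,
    star h hinv s (sinv h hinv T) ≤ t → t ≤ s → ‖(Φ t s₀) ξ‖ ≤ C * ‖(Φ s s₀) ξ‖

/-- Uniform bounded `h`-growth and `h`-decay on `I`: every solution satisfies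
`|x t| ≤ C |x s|` for `s ∈ I` and `t ∈ [s∗T^{∗-1}, s∗T] ∩ I`. -/
def UnifBoundedHGrowthDecay (J I : Set ℝ) (h hinv : ℝ → ℝ) (Φ : ℝ → ℝ → (E →L[ℝ] E)) : Prop :=
  ∃ T > estar hinv, ∃ C ≥ (1:ℝ), ∀ s₀ ∈ J, ∀ ξ : E, ∀ s ∈ I, ∀ t ∈ I,
    star h hinv s (sinv h hinv T) ≤ t → t ≤ star h hinv s T → ‖(Φ t s₀) ξ‖ ≤ C * ‖(Φ s s₀) ξ‖

/-- `Φ` is uniformly `h`-noncritical on `[e∗,∞)`: there are `T > e∗` and `θ ∈ (0,1)` with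
`|x t| ≤ θ · sup {|x u| : u ∈ J, |u ∗ t^{∗-1}|∗ ≤ T}` for all `t ≥ T`, for every solution. -/
def UnifHNoncritical (J : Set ℝ) (h hinv : ℝ → ℝ) (Φ : ℝ → ℝ → (E →L[ℝ] E)) : Prop :=
  ∃ T > estar hinv, ∃ θ : ℝ, 0 < θ ∧ θ < 1 ∧
    ∀ s₀ ∈ J, ∀ ξ : E, ∀ t, T ≤ t →
      ‖(Φ t s₀) ξ‖ ≤ θ * sSup ((fun u => ‖(Φ u s₀) ξ‖) ''
        {u | u ∈ J ∧ absStar h hinv (star h hinv u (sinv h hinv t)) ≤ T})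

/-- `Φ` is `h`-expansive on `I`: there are `L, β > 0` such that every solution satisfies
`|x t| ≤ L (h(t∗a^{∗-1})^{-β} |x a| + h(b∗t^{∗-1})^{-β} |x b|)` for `[a,b] ⊆ I`, `a ≤ t ≤ b`. -/
def HExpansive (J I : Set ℝ) (h hinv : ℝ → ℝ) (Φ : ℝ → ℝ → (E →L[ℝ] E)) : Prop :=
  ∃ L > (0:ℝ), ∃ β > (0:ℝ), ∀ s₀ ∈ J, ∀ ξ : E, ∀ a ∈ I, ∀ b ∈ I, ∀ t, a ≤ t → t ≤ b →
    ‖(Φ t s₀) ξ‖ ≤ L * ((h (star h hinv t (sinv h hinv a))) ^ (-β) * ‖(Φ a s₀) ξ‖ +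
      (h (star h hinv b (sinv h hinv t))) ^ (-β) * ‖(Φ b s₀) ξ‖)

/-!
Both conditions say that `‖Φ t s‖` is bounded once `h s / h t` is. Bounded decay over one
`h`-step of ratio `τ = h T > 1` gives `‖Φ t s‖ ≤ C` for `h s ≤ τ h t`; splitting `[t, s]` at the
points where `h` is multiplied by `τ` and using the cocycle property, `h s / h t < τ ^ (n + 1)`
gives `‖Φ t s‖ ≤ C ^ (n + 1) ≤ C (h s / h t) ^ β` with `β = log_τ C`. Conversely a polynomial
bound is a uniform bound over any fixed ratio, here `2`.
-/

lemma pow_le_rpow_logb {τ C r : ℝ} {n : ℕ} (hτ : 1 < τ) (hC : 1 ≤ C) (hn : τ ^ n ≤ r) :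
    C ^ n ≤ r ^ Real.logb τ C := calc
  C ^ n = (τ ^ Real.logb τ C) ^ n := by
    rw [Real.rpow_logb (by linarith) hτ.ne' (by linarith)]
  _ = (τ ^ n) ^ Real.logb τ C := Real.rpow_pow_comm (by linarith) _ _
  _ ≤ r ^ Real.logb τ C := by
    gcongr
    exact Real.logb_nonneg hτ hC

namespace GrowthRate

variable {J : Set ℝ} {h hinv : ℝ → ℝ} (hgr : GrowthRate J h hinv)
include hgr

lemma mem_of_le {a b : ℝ} (ha : a ∈ J) (hab : a ≤ b) : b ∈ J := by
  rcases hgr.J_eq with ⟨a₀, rfl⟩ | rfl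
  · exact lt_of_lt_of_le ha hab
  · trivial

lemma hinv_mem {y : ℝ} (hy : 0 < y) : hinv y ∈ J := hgr.inv_mem y hy

lemma h_hinv {y : ℝ} (hy : 0 < y) : h (hinv y) = y := hgr.inv_right y hy

lemma estar_mem : estar hinv ∈ J := hgr.hinv_mem one_pos

lemma h_estar : h (estar hinv) = 1 := hgr.h_hinv one_pos

lemma estar_lt_hinv {y : ℝ} (hy : 1 < y) : estar hinv < hinv y := by
  have hy0 : 0 < y := by linarith
  rw [← hgr.mono.lt_iff_lt hgr.estar_mem (hgr.hinv_mem hy0), hgr.h_estar, hgr.h_hinv hy0]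
  exact hy

lemma one_lt_h_of_estar_lt {T : ℝ} (hT : estar hinv < T) : 1 < h T := by
  simpa only [hgr.h_estar] using hgr.mono hgr.estar_mem (hgr.mem_of_le hgr.estar_mem hT.le) hT

lemma star_sinv_le_iff {s t T : ℝ} (hs : s ∈ J) (ht : t ∈ J) (hT : T ∈ J) :
    star h hinv s (sinv h hinv T) ≤ t ↔ h s ≤ h T * h t := by
  have hsT : 0 < h s / h T := div_pos (hgr.pos s hs) (hgr.pos T hT)
  have hprod : h s * h (sinv h hinv T) = h s / h T := by
    rw [sinv, hgr.h_hinv (one_div_pos.mpr (hgr.pos T hT)), mul_one_div]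
  rw [_root_.star, hprod, ← hgr.mono.le_iff_le (hgr.hinv_mem hsT) ht, hgr.h_hinv hsT,
    div_le_iff₀' (hgr.pos T hT)]

end GrowthRate

section EvolutionFamily

variable {J I : Set ℝ} {h hinv : ℝ → ℝ} {Φ : ℝ → ℝ → (E →L[ℝ] E)}

lemma unifBoundedHDecay_iff_opNorm_le (hgr : GrowthRate J h hinv) (hIJ : I ⊆ J)
    (hΦ : IsEvolutionFamily J Φ) :
    UnifBoundedHDecay J I h hinv Φ ↔ ∃ T > estar hinv, ∃ C ≥ (1:ℝ),
      ∀ t ∈ I, ∀ s ∈ I, t ≤ s → h s ≤ h T * h t → ‖Φ t s‖ ≤ C := by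
  unfold UnifBoundedHDecay
  refine exists_congr fun T => and_congr_right fun hT => exists_congr fun C =>
    and_congr_right fun hC => ?_
  have hTJ : T ∈ J := hgr.mem_of_le hgr.estar_mem hT.le
  constructor
  · intro hdec t ht s hs hts hst
    refine ContinuousLinearMap.opNorm_le_bound _ (by linarith) fun ξ => ?_
    have hsol := hdec s (hIJ hs) ξ s hs t ht
      ((hgr.star_sinv_le_iff (hIJ hs) (hIJ ht) hTJ).mpr hst) hts
    rwa [hΦ.1 s (hIJ hs)] at hsol
  · intro hloc s₀ hs₀ ξ s hs t ht hst hts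
    rw [hgr.star_sinv_le_iff (hIJ hs) (hIJ ht) hTJ] at hst
    calc ‖Φ t s₀ ξ‖ = ‖Φ t s (Φ s s₀ ξ)‖ := by
          rw [← hΦ.2 t (hIJ ht) s (hIJ hs) s₀ hs₀]; rfl
      _ ≤ ‖Φ t s‖ * ‖Φ s s₀ ξ‖ := ContinuousLinearMap.le_opNorm _ _
      _ ≤ C * ‖Φ s s₀ ξ‖ := by gcongr; exact hloc t ht s hs hts hst

variable (hgr : GrowthRate J h hinv) (hIJ : I ⊆ J) (hIc : I.OrdConnected)
  (hΦ : IsEvolutionFamily J Φ) {τ C : ℝ} (hC : 1 ≤ C)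
  (hloc : ∀ t ∈ I, ∀ s ∈ I, t ≤ s → h s ≤ τ * h t → ‖Φ t s‖ ≤ C)
include hgr hIJ hIc hΦ hC hloc

lemma opNorm_le_pow_of_le_pow_mul (hτ : 1 ≤ τ) (n : ℕ) :
    ∀ t ∈ I, ∀ s ∈ I, t ≤ s → h s ≤ τ ^ (n + 1) * h t → ‖Φ t s‖ ≤ C ^ (n + 1) := by
  induction n with
  | zero => simpa only [zero_add, pow_one] using hloc
  | succ n ih =>
    intro t ht s hs hts hst
    by_cases hnear : h s ≤ τ * h t
    · exact (hloc t ht s hs hts hnear).trans (le_self_pow₀ hC (by omega))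
    have hτt : 0 < τ * h t := mul_pos (by linarith) (hgr.pos t (hIJ ht))
    set u := hinv (τ * h t)
    have huJ : u ∈ J := hgr.hinv_mem hτt
    have hhu : h u = τ * h t := hgr.h_hinv hτt
    have htu : t ≤ u := by
      rw [← hgr.mono.le_iff_le (hIJ ht) huJ, hhu]
      exact le_mul_of_one_le_left (hgr.pos t (hIJ ht)).le hτ
    have hus : u ≤ s := by
      rw [← hgr.mono.le_iff_le huJ (hIJ hs), hhu]
      exact (not_le.mp hnear).le
    have huI : u ∈ I := hIc.out ht hs ⟨htu, hus⟩
    calc ‖Φ t s‖ = ‖Φ t u * Φ u s‖ := by rw [hΦ.2 t (hIJ ht) u huJ s (hIJ hs)]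
      _ ≤ ‖Φ t u‖ * ‖Φ u s‖ := norm_mul_le _ _
      _ ≤ C * C ^ (n + 1) := by
        gcongr
        · exact hloc t ht u huI htu hhu.le
        · exact ih u huI s hs hus (by rwa [hhu, ← mul_assoc, ← pow_succ])
      _ = C ^ (n + 1 + 1) := (pow_succ' C (n + 1)).symm

lemma opNorm_le_mul_rpow_logb (hτ : 1 < τ) {t s : ℝ} (ht : t ∈ I) (hs : s ∈ I) (hts : t ≤ s) :
    ‖Φ t s‖ ≤ C * (h s / h t) ^ Real.logb τ C := by
  have hht : 0 < h t := hgr.pos t (hIJ ht)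
  have hratio : 1 ≤ h s / h t :=
    (one_le_div hht).mpr (hgr.mono.monotoneOn (hIJ ht) (hIJ hs) hts)
  obtain ⟨n, hlow, hhigh⟩ := exists_nat_pow_near hratio hτ
  calc ‖Φ t s‖ ≤ C ^ (n + 1) :=
        opNorm_le_pow_of_le_pow_mul hgr hIJ hIc hΦ hC hloc hτ.le n t ht s hs hts
          ((div_lt_iff₀ hht).mp hhigh).le
    _ = C * C ^ n := pow_succ' C n
    _ ≤ C * (h s / h t) ^ Real.logb τ C := by gcongr; exact pow_le_rpow_logb hτ hC hlow

end EvolutionFamily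

theorem statement3_general {J I : Set ℝ} {h hinv : ℝ → ℝ} (hgr : GrowthRate J h hinv)
    (hIJ : I ⊆ J) (hIc : I.OrdConnected)
    {E : Type*} [NormedAddCommGroup E] [NormedSpace ℝ E]
    (Φ : ℝ → ℝ → (E →L[ℝ] E)) (hΦ : IsEvolutionFamily J Φ) :
    UnifBoundedHDecay J I h hinv Φ ↔
      ∃ K₀ ≥ (1:ℝ), ∃ β ≥ (0:ℝ), ∀ t ∈ I, ∀ s ∈ I, t ≤ s →
        ‖Φ t s‖ ≤ K₀ * (h s / h t) ^ β := by
  rw [unifBoundedHDecay_iff_opNorm_le hgr hIJ hΦ]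
  constructor
  · rintro ⟨T, hT, C, hC, hloc⟩
    have hτ := hgr.one_lt_h_of_estar_lt hT
    exact ⟨C, hC, Real.logb (h T) C, Real.logb_nonneg hτ hC, fun t ht s hs hts =>
      opNorm_le_mul_rpow_logb hgr hIJ hIc hΦ hC hloc hτ ht hs hts⟩
  · rintro ⟨K₀, hK₀, β, hβ, hbd⟩
    have h2 : h (hinv 2) = 2 := hgr.h_hinv two_pos
    refine ⟨hinv 2, hgr.estar_lt_hinv one_lt_two, K₀ * 2 ^ β,
      one_le_mul_of_one_le_of_one_le hK₀ (Real.one_le_rpow one_le_two hβ),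
      fun t ht s hs hts hst => (hbd t ht s hs hts).trans ?_⟩
    have hht := hgr.pos t (hIJ ht)
    have hhs := hgr.pos s (hIJ hs)
    gcongr
    rwa [div_le_iff₀ hht, ← h2]

/-- uniform bounded `h`-decay on `I` is equivalent to
`‖Φ(t,s)‖ ≤ K₀ (h s / h t)^β` for all `s ≥ t` in `I`, for some `K₀ ≥ 1`, `β ≥ 0`. -/
theorem statement3 {J I : Set ℝ} {h hinv : ℝ → ℝ} (hgr : GrowthRate J h hinv)
    (hIJ : I ⊆ J) (hIc : I.OrdConnected)
    {E : Type*} [NormedAddCommGroup E] [NormedSpace ℝ E] [FiniteDimensional ℝ E]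
    (Φ : ℝ → ℝ → (E →L[ℝ] E)) (hΦ : IsEvolutionFamily J Φ) :
    UnifBoundedHDecay J I h hinv Φ ↔
      ∃ K₀ ≥ (1:ℝ), ∃ β ≥ (0:ℝ), ∀ t ∈ I, ∀ s ∈ I, t ≤ s →
        ‖Φ t s‖ ≤ K₀ * (h s / h t) ^ β :=
  statement3_general hgr hIJ hIc Φ hΦ
end
end

section
/- For any interval I ⊆ J, the evolution family Φ has uniform bounded h-growth and h-decay on I if and only if there exist constants K₀ ≥ 1 and β ≥ 0 such that ‖Φ(t,s)‖ ≤ K₀·h(|t∗s^{∗-1}|∗)^β for all t, s ∈ I. -/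
open Set

noncomputable section

variable {E : Type*} [NormedAddCommGroup E] [NormedSpace ℝ E]

/-! In the coordinate `ℓ = log ∘ h` the window `[s ∗ T^{∗-1}, s ∗ T]` is `|ℓ t - ℓ s| ≤ log h(T)`
and `h(|t ∗ s^{∗-1}|∗) = exp |ℓ t - ℓ s|`, while bounded growth and decay of all solutions on a
window is the operator bound `‖Φ(t,s)‖ ≤ C` there. As `‖Φ(t,s)‖` is submultiplicative and `ℓ` is
continuous on the interval `I`, a pair at `ℓ`-distance `≤ (n+1) log h(T)` is joined by `n+1`
windows, so `‖Φ(t,s)‖ ≤ C^{n+1} ≤ C · (exp |ℓ t - ℓ s|)^β` with `β = log C / log h(T)`. -/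

open Real

section ExponentialBound

variable {α : Type*} [TopologicalSpace α] {I : Set α} {F : α → α → ℝ} {ℓ : α → ℝ} {δ C : ℝ}

theorem le_pow_succ_of_abs_sub_le (hI : IsPreconnected I) (hℓ : ContinuousOn ℓ I)
    (hF : ∀ t ∈ I, ∀ s ∈ I, 0 ≤ F t s)
    (hmul : ∀ t ∈ I, ∀ v ∈ I, ∀ s ∈ I, F t s ≤ F t v * F v s)
    (hloc : ∀ t ∈ I, ∀ s ∈ I, |ℓ t - ℓ s| ≤ δ → F t s ≤ C) (n : ℕ) :
    ∀ t ∈ I, ∀ s ∈ I, |ℓ t - ℓ s| ≤ (n + 1) * δ → F t s ≤ C ^ (n + 1) := by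
  induction n with
  | zero => simpa using hloc
  | succ n ih =>
    intro t ht s hs hts
    push_cast at hts
    have hn : (0 : ℝ) < n + 2 := by positivity
    obtain ⟨v, hv, hℓv⟩ : ∃ v ∈ I, ℓ v = ℓ s + (ℓ t - ℓ s) / (n + 2) := by
      have hfrac : ∀ x : ℝ, 0 ≤ x → 0 ≤ x / (n + 2) ∧ x / (n + 2) ≤ x := fun x hx =>
        ⟨div_nonneg hx hn.le, div_le_self hx (by linarith [n.cast_nonneg (α := ℝ)])⟩
      rcases le_total (ℓ s) (ℓ t) with hst | hst
      · obtain ⟨h₀, h₁⟩ := hfrac _ (sub_nonneg.2 hst)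
        exact hI.intermediate_value hs ht hℓ ⟨by linarith, by linarith⟩
      · obtain ⟨h₀, h₁⟩ := hfrac _ (sub_nonneg.2 hst)
        have : (ℓ t - ℓ s) / (n + 2) = -((ℓ s - ℓ t) / (n + 2)) := by ring
        exact hI.intermediate_value ht hs hℓ ⟨by linarith, by linarith⟩
    have hvs : |ℓ v - ℓ s| ≤ δ := by
      rw [hℓv, add_sub_cancel_left, abs_div, abs_of_pos hn, div_le_iff₀ hn]
      linarith
    have htv : |ℓ t - ℓ v| ≤ (n + 1) * δ := by
      have : ℓ t - ℓ v = (n + 1) / (n + 2) * (ℓ t - ℓ s) := by rw [hℓv]; field_simp; ring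
      rw [this, abs_mul, abs_of_pos (by positivity), div_mul_eq_mul_div, div_le_iff₀ hn]
      nlinarith [n.cast_nonneg (α := ℝ)]
    calc F t s ≤ F t v * F v s := hmul t ht v hv s hs
      _ ≤ C ^ (n + 1) * C :=
        mul_le_mul (ih t ht v hv htv) (hloc v hv s hs hvs) (hF v hv s hs)
          ((hF t ht v hv).trans (ih t ht v hv htv))
      _ = C ^ (n + 1 + 1) := (pow_succ C (n + 1)).symm

theorem le_mul_exp_of_local_bound (hI : IsPreconnected I) (hℓ : ContinuousOn ℓ I)
    (hF : ∀ t ∈ I, ∀ s ∈ I, 0 ≤ F t s)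
    (hmul : ∀ t ∈ I, ∀ v ∈ I, ∀ s ∈ I, F t s ≤ F t v * F v s)
    (hδ : 0 < δ) (hC : 1 ≤ C) (hloc : ∀ t ∈ I, ∀ s ∈ I, |ℓ t - ℓ s| ≤ δ → F t s ≤ C)
    {t s : α} (ht : t ∈ I) (hs : s ∈ I) :
    F t s ≤ C * exp (|ℓ t - ℓ s|) ^ (log C / δ) := by
  set d := |ℓ t - ℓ s|
  set n := ⌊d / δ⌋₊
  have hdn : d ≤ (n + 1) * δ := by
    have := Nat.lt_floor_add_one (d / δ)
    rw [div_lt_iff₀ hδ] at this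
    exact this.le
  have hnd : (n : ℝ) * log C ≤ d * (log C / δ) := by
    calc (n : ℝ) * log C ≤ d / δ * log C :=
          mul_le_mul_of_nonneg_right (Nat.floor_le (by positivity)) (log_nonneg hC)
      _ = d * (log C / δ) := by ring
  calc F t s ≤ C ^ (n + 1) := le_pow_succ_of_abs_sub_le hI hℓ hF hmul hloc n t ht s hs hdn
    _ = C * exp (n * log C) := by
      rw [exp_nat_mul, exp_log (by linarith), pow_succ']
    _ ≤ C * exp (d * (log C / δ)) := by gcongr
    _ = C * exp d ^ (log C / δ) := by rw [exp_mul]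

theorem exists_local_bound_iff_exists_exp_bound (hI : IsPreconnected I)
    (hℓ : ContinuousOn ℓ I) (hF : ∀ t ∈ I, ∀ s ∈ I, 0 ≤ F t s)
    (hmul : ∀ t ∈ I, ∀ v ∈ I, ∀ s ∈ I, F t s ≤ F t v * F v s) :
    (∃ δ > (0 : ℝ), ∃ C ≥ (1 : ℝ), ∀ t ∈ I, ∀ s ∈ I, |ℓ t - ℓ s| ≤ δ → F t s ≤ C) ↔
      ∃ K ≥ (1 : ℝ), ∃ β ≥ (0 : ℝ), ∀ t ∈ I, ∀ s ∈ I, F t s ≤ K * exp (|ℓ t - ℓ s|) ^ β := by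
  constructor
  · rintro ⟨δ, hδ, C, hC, hloc⟩
    exact ⟨C, hC, log C / δ, div_nonneg (log_nonneg hC) hδ.le,
      fun t ht s hs => le_mul_exp_of_local_bound hI hℓ hF hmul hδ hC hloc ht hs⟩
  · rintro ⟨K, hK, β, hβ, hexp⟩
    refine ⟨1, one_pos, K * exp 1 ^ β, one_le_mul_of_one_le_of_one_le hK
      (one_le_rpow (one_le_exp zero_le_one) hβ), fun t ht s hs hts => (hexp t ht s hs).trans ?_⟩
    gcongr

end ExponentialBound

namespace GrowthRate

variable {J : Set ℝ} {h hinv : ℝ → ℝ}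

theorem mem_of_le_s4 (hgr : GrowthRate J h hinv) {x y : ℝ} (hx : x ∈ J) (hxy : x ≤ y) : y ∈ J := by
  rcases hgr.J_eq with ⟨a, rfl⟩ | rfl
  · exact lt_of_lt_of_le hx hxy
  · trivial

theorem strictMonoOn_hinv (hgr : GrowthRate J h hinv) : StrictMonoOn hinv (Ioi 0) :=
  fun x hx y hy hxy => lt_of_not_ge fun hyx => by
    have := hgr.mono.monotoneOn (hgr.inv_mem y hy) (hgr.inv_mem x hx) hyx
    rw [hgr.inv_right x hx, hgr.inv_right y hy] at this
    exact hxy.not_ge this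

theorem le_hinv_iff (hgr : GrowthRate J h hinv) {t x : ℝ} (ht : t ∈ J) (hx : 0 < x) :
    t ≤ hinv x ↔ h t ≤ x := by
  rw [← hgr.mono.le_iff_le ht (hgr.inv_mem x hx), hgr.inv_right x hx]

theorem hinv_le_iff (hgr : GrowthRate J h hinv) {t x : ℝ} (ht : t ∈ J) (hx : 0 < x) :
    hinv x ≤ t ↔ x ≤ h t := by
  rw [← hgr.mono.le_iff_le (hgr.inv_mem x hx) ht, hgr.inv_right x hx]

theorem h_sinv (hgr : GrowthRate J h hinv) {t : ℝ} (ht : t ∈ J) : h (sinv h hinv t) = 1 / h t :=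
  hgr.inv_right _ (one_div_pos.2 (hgr.pos t ht))

theorem star_le_and_le_star_iff (hgr : GrowthRate J h hinv) {s t T : ℝ} (hs : s ∈ J)
    (ht : t ∈ J) (hT : T ∈ J) :
    star h hinv s (sinv h hinv T) ≤ t ∧ t ≤ star h hinv s T ↔
      |log (h t) - log (h s)| ≤ log (h T) := by
  have hs' := hgr.pos s hs
  have ht' := hgr.pos t ht
  have hT' := hgr.pos T hT
  have key : ∀ x y : ℝ, 0 < x → 0 < y → (x ≤ y * h T ↔ log x - log y ≤ log (h T)) :=
    fun x y hx hy => by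
      rw [sub_le_iff_le_add', ← log_mul hy.ne' hT'.ne', log_le_log_iff hx (mul_pos hy hT')]
  rw [_root_.star, _root_.star, hgr.h_sinv hT,
    hgr.hinv_le_iff ht (mul_pos hs' (one_div_pos.2 hT')), hgr.le_hinv_iff ht (mul_pos hs' hT'),
    mul_one_div, div_le_iff₀ hT', key _ _ hs' ht', key _ _ ht' hs', abs_sub_le_iff]
  exact and_comm

theorem h_absStar (hgr : GrowthRate J h hinv) {x : ℝ} (hx : x ∈ J) :
    h (absStar h hinv x) = exp |log (h x)| := by
  have hx' := hgr.pos x hx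
  rw [absStar]
  split_ifs with hex
  · rw [abs_of_nonneg (log_nonneg ((hgr.hinv_le_iff hx one_pos).1 hex)), exp_log hx']
  · have hx1 : h x < 1 := lt_of_not_ge fun h1 => hex ((hgr.hinv_le_iff hx one_pos).2 h1)
    rw [hgr.h_sinv hx, abs_of_neg (log_neg hx' hx1), exp_neg, exp_log hx', one_div]

theorem h_absStar_star_sinv (hgr : GrowthRate J h hinv) {t s : ℝ} (ht : t ∈ J) (hs : s ∈ J) :
    h (absStar h hinv (star h hinv t (sinv h hinv s))) = exp |log (h t) - log (h s)| := by
  have hts : 0 < h t * h (sinv h hinv s) := by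
    rw [hgr.h_sinv hs]; exact mul_pos (hgr.pos t ht) (one_div_pos.2 (hgr.pos s hs))
  rw [_root_.star, hgr.h_absStar (hgr.inv_mem _ hts), hgr.inv_right _ hts, hgr.h_sinv hs,
    mul_one_div, log_div (hgr.pos t ht).ne' (hgr.pos s hs).ne']

end GrowthRate

namespace IsEvolutionFamily

variable {J : Set ℝ} {Φ : ℝ → ℝ → (E →L[ℝ] E)}

theorem norm_le_mul (hΦ : IsEvolutionFamily J Φ) {t v s : ℝ} (ht : t ∈ J) (hv : v ∈ J)
    (hs : s ∈ J) : ‖Φ t s‖ ≤ ‖Φ t v‖ * ‖Φ v s‖ :=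
  hΦ.2 t ht v hv s hs ▸ norm_mul_le _ _

theorem norm_le_iff_forall_solution (hΦ : IsEvolutionFamily J Φ) {t s C : ℝ} (ht : t ∈ J)
    (hs : s ∈ J) (hC : 0 ≤ C) :
    ‖Φ t s‖ ≤ C ↔ ∀ s₀ ∈ J, ∀ ξ : E, ‖Φ t s₀ ξ‖ ≤ C * ‖Φ s s₀ ξ‖ := by
  refine ⟨fun hb s₀ hs₀ ξ => ?_, fun hb => ?_⟩
  · rw [← hΦ.2 t ht s hs s₀ hs₀]
    exact (Φ t s).le_of_opNorm_le hb _
  · refine ContinuousLinearMap.opNorm_le_bound _ hC fun ξ => ?_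
    simpa [hΦ.1 s hs] using hb s hs ξ

end IsEvolutionFamily

theorem GrowthRate.unifBoundedHGrowthDecay_iff {J I : Set ℝ} {h hinv : ℝ → ℝ}
    (hgr : GrowthRate J h hinv) (hIJ : I ⊆ J) {Φ : ℝ → ℝ → (E →L[ℝ] E)}
    (hΦ : IsEvolutionFamily J Φ) :
    UnifBoundedHGrowthDecay J I h hinv Φ ↔ ∃ δ > (0 : ℝ), ∃ C ≥ (1 : ℝ),
      ∀ t ∈ I, ∀ s ∈ I, |log (h t) - log (h s)| ≤ δ → ‖Φ t s‖ ≤ C := by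
  have hestar : estar hinv ∈ J := hgr.inv_mem 1 (mem_Ioi.2 one_pos)
  constructor
  · rintro ⟨T, hT, C, hC, hb⟩
    have hTJ : T ∈ J := hgr.mem_of_le_s4 hestar hT.le
    have hhT : 1 < h T := hgr.inv_right 1 (mem_Ioi.2 one_pos) ▸ hgr.mono hestar hTJ hT
    refine ⟨log (h T), log_pos hhT, C, hC, fun t ht s hs hts => ?_⟩
    obtain ⟨h₁, h₂⟩ := (hgr.star_le_and_le_star_iff (hIJ hs) (hIJ ht) hTJ).2 hts
    exact (hΦ.norm_le_iff_forall_solution (hIJ ht) (hIJ hs) (by linarith)).2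
      fun s₀ hs₀ ξ => hb s₀ hs₀ ξ s hs t ht h₁ h₂
  · rintro ⟨δ, hδ, C, hC, hb⟩
    have hexp : (0 : ℝ) < exp δ := exp_pos δ
    refine ⟨hinv (exp δ), hgr.strictMonoOn_hinv (mem_Ioi.2 one_pos) hexp (one_lt_exp_iff.2 hδ),
      C, hC, fun s₀ hs₀ ξ s hs t ht h₁ h₂ => ?_⟩
    have hts := (hgr.star_le_and_le_star_iff (hIJ hs) (hIJ ht) (hgr.inv_mem _ hexp)).1 ⟨h₁, h₂⟩
    rw [hgr.inv_right _ hexp, log_exp] at hts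
    exact (hΦ.norm_le_iff_forall_solution (hIJ ht) (hIJ hs) (by linarith)).1
      (hb t ht s hs hts) s₀ hs₀ ξ

theorem statement4_general {J I : Set ℝ} {h hinv : ℝ → ℝ} (hgr : GrowthRate J h hinv)
    (hIJ : I ⊆ J) (hIc : I.OrdConnected)
    {E : Type*} [NormedAddCommGroup E] [NormedSpace ℝ E]
    (Φ : ℝ → ℝ → (E →L[ℝ] E)) (hΦ : IsEvolutionFamily J Φ) :
    UnifBoundedHGrowthDecay J I h hinv Φ ↔
      ∃ K₀ ≥ (1:ℝ), ∃ β ≥ (0:ℝ), ∀ t ∈ I, ∀ s ∈ I,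
        ‖Φ t s‖ ≤ K₀ * (h (absStar h hinv (star h hinv t (sinv h hinv s)))) ^ β := by
  have hℓ : ContinuousOn (fun t => log (h t)) I :=
    (hgr.cont.mono hIJ).log fun t ht => (hgr.pos t (hIJ ht)).ne'
  refine (hgr.unifBoundedHGrowthDecay_iff hIJ hΦ).trans <|
    (exists_local_bound_iff_exists_exp_bound (F := fun t s => ‖Φ t s‖) hIc.isPreconnected hℓ
      (fun _ _ _ _ => norm_nonneg _)
      fun t ht v hv s hs => hΦ.norm_le_mul (hIJ ht) (hIJ hv) (hIJ hs)).trans ?_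
  refine exists_congr fun K => and_congr_right fun _ => exists_congr fun β =>
    and_congr_right fun _ => forall₂_congr fun t ht => forall₂_congr fun s hs => ?_
  rw [hgr.h_absStar_star_sinv (hIJ ht) (hIJ hs)]

/-- uniform bounded `h`-growth and `h`-decay on `I` is equivalent to
`‖Φ(t,s)‖ ≤ K₀ h(|t ∗ s^{∗-1}|∗)^β` for all `t, s ∈ I`, for some `K₀ ≥ 1`, `β ≥ 0`. -/
theorem statement4 {J I : Set ℝ} {h hinv : ℝ → ℝ} (hgr : GrowthRate J h hinv)
    (hIJ : I ⊆ J) (hIc : I.OrdConnected)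
    {E : Type*} [NormedAddCommGroup E] [NormedSpace ℝ E] [FiniteDimensional ℝ E]
    (Φ : ℝ → ℝ → (E →L[ℝ] E)) (hΦ : IsEvolutionFamily J Φ) :
    UnifBoundedHGrowthDecay J I h hinv Φ ↔
      ∃ K₀ ≥ (1:ℝ), ∃ β ≥ (0:ℝ), ∀ t ∈ I, ∀ s ∈ I,
        ‖Φ t s‖ ≤ K₀ * (h (absStar h hinv (star h hinv t (sinv h hinv s)))) ^ β :=
  statement4_general hgr hIJ hIc Φ hΦ
end
end

section
/- Let I ⊆ J be an interval and fix t₀ ∈ J. The evolution family Φ has a uniform h-dichotomy on I if and only if there exist an n×n real matrix P with P² = P and positive constants K₁, K₂, M, α such that for every ξ ∈ ℝⁿ: (a) |Φ(t,t₀)Pξ| ≤ K₁·(h(t)/h(s))^{-α}·|Φ(s,t₀)Pξ| for all t ≥ s with t, s ∈ I; (b) |Φ(t,t₀)(I − P)ξ| ≤ K₂·(h(s)/h(t))^{-α}·|Φ(s,t₀)(I − P)ξ| for all t ≤ s with t, s ∈ I; and (c) ‖Φ(t,t₀)·P·Φ(t₀,t)‖ ≤ M for all t ∈ I. -/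
open Set

noncomputable section

variable {E : Type*} [NormedAddCommGroup E] [NormedSpace ℝ E]

/-!
A uniform dichotomy is the same thing as a single projection `P` at `t₀` whose transports
`P(t) = Φ(t,t₀) P Φ(t₀,t)` stay bounded on `I`: invariance `P(t) Φ(t,s) = Φ(t,s) P(s)` forces
every projection of a dichotomy to be the transport of one of them pulled back to `t₀`.
Since `Φ(t,s) P(s) = Φ(t,t₀) P Φ(t₀,s)` and `Φ(s,t₀) P = P(s) Φ(s,t₀) P`, an operator bound on
`Φ(t,s) P(s)` is a bound on the solutions `Φ(·,t₀) P ξ`, and conversely a bound on those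
solutions bounds `Φ(t,s) P(s)` up to the factor `‖P(s)‖ ≤ M`; likewise for `1 - P`, with the
factor `‖1 - P(s)‖ ≤ 1 + M`.
-/

namespace IsEvolutionFamily

variable {J : Set ℝ} {Φ : ℝ → ℝ → (E →L[ℝ] E)}

theorem mul_eq_one (hΦ : IsEvolutionFamily J Φ) {t s : ℝ} (ht : t ∈ J) (hs : s ∈ J) :
    Φ t s * Φ s t = 1 := by
  rw [hΦ.2 t ht s hs t ht, hΦ.1 t ht]

theorem mul_mul_eq_mul (hΦ : IsEvolutionFamily J Φ) {t u s : ℝ} (ht : t ∈ J) (hu : u ∈ J)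
    (hs : s ∈ J) (A : E →L[ℝ] E) : Φ t u * (Φ u s * A) = Φ t s * A := by
  rw [← mul_assoc, hΦ.2 t ht u hu s hs]

end IsEvolutionFamily

def evolConj (Φ : ℝ → ℝ → (E →L[ℝ] E)) (t₀ : ℝ) (P : E →L[ℝ] E) (t : ℝ) : E →L[ℝ] E :=
  Φ t t₀ * P * Φ t₀ t

section evolConj

variable {J : Set ℝ} {Φ : ℝ → ℝ → (E →L[ℝ] E)} {t₀ t s : ℝ} {P : E →L[ℝ] E}

theorem evolConj_one_sub (hΦ : IsEvolutionFamily J Φ) (ht₀ : t₀ ∈ J) (ht : t ∈ J) :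
    evolConj Φ t₀ (1 - P) t = 1 - evolConj Φ t₀ P t := by
  simp only [evolConj, mul_sub, sub_mul, mul_one, hΦ.mul_eq_one ht ht₀]

theorem isIdempotentElem_evolConj (hΦ : IsEvolutionFamily J Φ) (ht₀ : t₀ ∈ J) (ht : t ∈ J)
    (hP : IsIdempotentElem P) : IsIdempotentElem (evolConj Φ t₀ P t) := by
  simp only [IsIdempotentElem, evolConj, mul_assoc]
  rw [← mul_assoc (Φ t₀ t), hΦ.mul_eq_one ht₀ ht, one_mul, ← mul_assoc P, hP.eq]

theorem evolConj_mul_comm (hΦ : IsEvolutionFamily J Φ) (ht₀ : t₀ ∈ J) (ht : t ∈ J) (hs : s ∈ J) :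
    evolConj Φ t₀ P t * Φ t s = Φ t s * evolConj Φ t₀ P s := by
  simp only [evolConj, mul_assoc]
  rw [hΦ.2 t₀ ht₀ t ht s hs, hΦ.mul_mul_eq_mul ht hs ht₀]

theorem mul_evolConj (hΦ : IsEvolutionFamily J Φ) (ht₀ : t₀ ∈ J) (ht : t ∈ J) (hs : s ∈ J) :
    Φ t s * evolConj Φ t₀ P s = Φ t t₀ * P * Φ t₀ s := by
  simp only [evolConj, mul_assoc]
  rw [hΦ.mul_mul_eq_mul ht hs ht₀]

theorem evolConj_evolConj (hΦ : IsEvolutionFamily J Φ) {t₁ : ℝ} (ht₀ : t₀ ∈ J) (ht₁ : t₁ ∈ J)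
    (ht : t ∈ J) : evolConj Φ t₀ (evolConj Φ t₁ P t₀) t = evolConj Φ t₁ P t := by
  simp only [evolConj, mul_assoc]
  rw [hΦ.mul_mul_eq_mul ht ht₀ ht₁, hΦ.2 t₁ ht₁ t₀ ht₀ t ht]

theorem evolConj_eq_of_mul_comm (hΦ : IsEvolutionFamily J Φ) (ht₀ : t₀ ∈ J) (ht : t ∈ J)
    {Q : E →L[ℝ] E} (hQ : Q * Φ t t₀ = Φ t t₀ * P) : evolConj Φ t₀ P t = Q := by
  rw [evolConj, ← hQ, mul_assoc, hΦ.mul_eq_one ht ht₀, mul_one]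

theorem norm_mul_apply_le_norm_mul_evolConj (hΦ : IsEvolutionFamily J Φ) (ht₀ : t₀ ∈ J)
    (ht : t ∈ J) (hs : s ∈ J) (hP : IsIdempotentElem P) (ξ : E) :
    ‖(Φ t t₀ * P) ξ‖ ≤ ‖Φ t s * evolConj Φ t₀ P s‖ * ‖(Φ s t₀ * P) ξ‖ := by
  have : Φ t t₀ * P = (Φ t s * evolConj Φ t₀ P s) * (Φ s t₀ * P) := by
    rw [mul_evolConj hΦ ht₀ ht hs, mul_assoc, mul_assoc, hΦ.mul_mul_eq_mul ht₀ hs ht₀,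
      hΦ.1 t₀ ht₀, one_mul, hP.eq]
  rw [this]
  exact (Φ t s * evolConj Φ t₀ P s).le_opNorm _

end evolConj

theorem ContinuousLinearMap.norm_comp_le_of_norm_apply_le {𝕜 F G H : Type*}
    [NontriviallyNormedField 𝕜] [SeminormedAddCommGroup F] [SeminormedAddCommGroup G]
    [SeminormedAddCommGroup H] [NormedSpace 𝕜 F] [NormedSpace 𝕜 G] [NormedSpace 𝕜 H]
    {A B : G →L[𝕜] H} {c : ℝ} (hc : 0 ≤ c) (hAB : ∀ x, ‖A x‖ ≤ c * ‖B x‖) (C : F →L[𝕜] G) :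
    ‖A ∘L C‖ ≤ c * ‖B ∘L C‖ :=
  (A ∘L C).opNorm_le_bound (by positivity) fun x =>
    (hAB (C x)).trans <| by
      rw [mul_assoc]
      exact mul_le_mul_of_nonneg_left ((B ∘L C).le_opNorm x) hc

theorem norm_mul_evolConj_le {J : Set ℝ} {Φ : ℝ → ℝ → (E →L[ℝ] E)} {t₀ t s c : ℝ}
    {P : E →L[ℝ] E} (hΦ : IsEvolutionFamily J Φ) (ht₀ : t₀ ∈ J) (ht : t ∈ J) (hs : s ∈ J)
    (hc : 0 ≤ c) (hgrowth : ∀ ξ, ‖(Φ t t₀ * P) ξ‖ ≤ c * ‖(Φ s t₀ * P) ξ‖) :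
    ‖Φ t s * evolConj Φ t₀ P s‖ ≤ c * ‖evolConj Φ t₀ P s‖ := by
  rw [mul_evolConj hΦ ht₀ ht hs]
  exact ContinuousLinearMap.norm_comp_le_of_norm_apply_le hc hgrowth _

theorem HasUHDWith.norm_le {I : Set ℝ} {h : ℝ → ℝ} {Φ : ℝ → ℝ → (E →L[ℝ] E)}
    {P : ℝ → (E →L[ℝ] E)} {K α t : ℝ} (hP : HasUHDWith I h Φ P K α) (ht : t ∈ I)
    (hht : h t ≠ 0) (hΦt : Φ t t = 1) : ‖P t‖ ≤ K := by
  simpa [hΦt, div_self hht] using hP.2.2.1 t ht t ht le_rfl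

theorem hasUHDWith_evolConj {J I : Set ℝ} {h : ℝ → ℝ} {Φ : ℝ → ℝ → (E →L[ℝ] E)}
    {P : E →L[ℝ] E} {t₀ K₁ K₂ M K α : ℝ} (hΦ : IsEvolutionFamily J Φ) (hIJ : I ⊆ J)
    (hpos : ∀ t ∈ I, 0 < h t) (ht₀ : t₀ ∈ J) (hP : IsIdempotentElem P) (hK₁ : 0 ≤ K₁)
    (hK₂ : 0 ≤ K₂) (hK₁M : K₁ * M ≤ K) (hK₂M : K₂ * (1 + M) ≤ K)
    (hstable : ∀ ξ : E, ∀ s ∈ I, ∀ t ∈ I, s ≤ t →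
      ‖(Φ t t₀ * P) ξ‖ ≤ K₁ * (h t / h s) ^ (-α) * ‖(Φ s t₀ * P) ξ‖)
    (hunstable : ∀ ξ : E, ∀ s ∈ I, ∀ t ∈ I, t ≤ s →
      ‖(Φ t t₀ * (1 - P)) ξ‖ ≤ K₂ * (h s / h t) ^ (-α) * ‖(Φ s t₀ * (1 - P)) ξ‖)
    (hbdd : ∀ t ∈ I, ‖evolConj Φ t₀ P t‖ ≤ M) :
    HasUHDWith I h Φ (evolConj Φ t₀ P) K α := by
  have hr : ∀ t ∈ I, ∀ s ∈ I, 0 ≤ (h t / h s) ^ (-α) := fun t ht s hs =>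
    Real.rpow_nonneg (div_pos (hpos t ht) (hpos s hs)).le _
  refine ⟨fun t ht => isIdempotentElem_evolConj hΦ ht₀ (hIJ ht) hP,
    fun t ht s hs => evolConj_mul_comm hΦ ht₀ (hIJ ht) (hIJ hs), fun s hs t ht hst => ?_,
    fun s hs t ht hts => ?_⟩
  · have := hr t ht s hs
    calc ‖Φ t s * evolConj Φ t₀ P s‖
        ≤ K₁ * (h t / h s) ^ (-α) * ‖evolConj Φ t₀ P s‖ :=
          norm_mul_evolConj_le hΦ ht₀ (hIJ ht) (hIJ hs) (by positivity)
            fun ξ => hstable ξ s hs t ht hst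
      _ ≤ K₁ * (h t / h s) ^ (-α) * M := by gcongr; exact hbdd s hs
      _ ≤ K * (h t / h s) ^ (-α) := by rw [mul_right_comm]; gcongr
  · have hcompl : ‖evolConj Φ t₀ (1 - P) s‖ ≤ 1 + M := by
      rw [evolConj_one_sub hΦ ht₀ (hIJ hs)]
      exact (norm_sub_le _ _).trans (add_le_add ContinuousLinearMap.norm_id_le (hbdd s hs))
    have := hr s hs t ht
    rw [← evolConj_one_sub hΦ ht₀ (hIJ hs)]
    calc ‖Φ t s * evolConj Φ t₀ (1 - P) s‖
        ≤ K₂ * (h s / h t) ^ (-α) * ‖evolConj Φ t₀ (1 - P) s‖ :=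
          norm_mul_evolConj_le hΦ ht₀ (hIJ ht) (hIJ hs) (by positivity)
            fun ξ => hunstable ξ s hs t ht hts
      _ ≤ K₂ * (h s / h t) ^ (-α) * (1 + M) := by gcongr
      _ ≤ K * (h s / h t) ^ (-α) := by rw [mul_right_comm]; gcongr

theorem HasUHDWith.evolConj_evolConj_eq {J I : Set ℝ} {h : ℝ → ℝ} {Φ : ℝ → ℝ → (E →L[ℝ] E)}
    {P : ℝ → (E →L[ℝ] E)} {K α t₀ t₁ t : ℝ} (hP : HasUHDWith I h Φ P K α)
    (hΦ : IsEvolutionFamily J Φ) (hIJ : I ⊆ J) (ht₀ : t₀ ∈ J) (ht₁ : t₁ ∈ I) (ht : t ∈ I) :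
    evolConj Φ t₀ (evolConj Φ t₁ (P t₁) t₀) t = P t := by
  rw [evolConj_evolConj hΦ ht₀ (hIJ ht₁) (hIJ ht)]
  exact evolConj_eq_of_mul_comm hΦ (hIJ ht₁) (hIJ ht) (hP.2.1 t ht t₁ ht₁)

theorem HasUHDWith.norm_mul_apply_le {J I : Set ℝ} {h : ℝ → ℝ} {Φ : ℝ → ℝ → (E →L[ℝ] E)}
    {P : ℝ → (E →L[ℝ] E)} {Q : E →L[ℝ] E} {K α t₀ : ℝ} (hP : HasUHDWith I h Φ P K α)
    (hΦ : IsEvolutionFamily J Φ) (hIJ : I ⊆ J) (ht₀ : t₀ ∈ J) (hQidem : IsIdempotentElem Q)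
    (hQ : ∀ t ∈ I, evolConj Φ t₀ Q t = P t) :
    (∀ ξ : E, ∀ s ∈ I, ∀ t ∈ I, s ≤ t →
      ‖(Φ t t₀ * Q) ξ‖ ≤ K * (h t / h s) ^ (-α) * ‖(Φ s t₀ * Q) ξ‖) ∧
    (∀ ξ : E, ∀ s ∈ I, ∀ t ∈ I, t ≤ s →
      ‖(Φ t t₀ * (1 - Q)) ξ‖ ≤ K * (h s / h t) ^ (-α) * ‖(Φ s t₀ * (1 - Q)) ξ‖) := by
  refine ⟨fun ξ s hs t ht hst => ?_, fun ξ s hs t ht hts => ?_⟩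
  · refine (norm_mul_apply_le_norm_mul_evolConj hΦ ht₀ (hIJ ht) (hIJ hs) hQidem ξ).trans ?_
    rw [hQ s hs]
    gcongr
    exact hP.2.2.1 s hs t ht hst
  · refine (norm_mul_apply_le_norm_mul_evolConj hΦ ht₀ (hIJ ht) (hIJ hs) hQidem.one_sub ξ).trans ?_
    rw [evolConj_one_sub hΦ ht₀ (hIJ hs), hQ s hs]
    gcongr
    exact hP.2.2.2 s hs t ht hts

theorem statement7_general {J I : Set ℝ} {h hinv : ℝ → ℝ} (hgr : GrowthRate J h hinv)
    (hIJ : I ⊆ J)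
    {E : Type*} [NormedAddCommGroup E] [NormedSpace ℝ E]
    (Φ : ℝ → ℝ → (E →L[ℝ] E)) (hΦ : IsEvolutionFamily J Φ)
    (t₀ : ℝ) (ht₀ : t₀ ∈ J) :
    HasUHD I h Φ ↔
      ∃ P : E →L[ℝ] E, P * P = P ∧ ∃ K₁ > (0:ℝ), ∃ K₂ > (0:ℝ), ∃ M > (0:ℝ), ∃ α > (0:ℝ),
        (∀ ξ : E, ∀ s ∈ I, ∀ t ∈ I, s ≤ t →
          ‖(Φ t t₀ * P) ξ‖ ≤ K₁ * (h t / h s) ^ (-α) * ‖(Φ s t₀ * P) ξ‖) ∧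
        (∀ ξ : E, ∀ s ∈ I, ∀ t ∈ I, t ≤ s →
          ‖(Φ t t₀ * (1 - P)) ξ‖ ≤ K₂ * (h s / h t) ^ (-α) * ‖(Φ s t₀ * (1 - P)) ξ‖) ∧
        (∀ t ∈ I, ‖Φ t t₀ * P * Φ t₀ t‖ ≤ M) := by
  have hpos : ∀ t ∈ I, 0 < h t := fun t ht => hgr.pos t (hIJ ht)
  constructor
  · rintro ⟨K, hK, α, hα, P, hP⟩
    rcases I.eq_empty_or_nonempty with rfl | ⟨t₁, ht₁⟩
    · exact ⟨0, mul_zero 0, 1, one_pos, 1, one_pos, 1, one_pos, 1, one_pos, by simp, by simp,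
        by simp⟩
    -- any fibre `P(t₁)` of the dichotomy, pulled back to `t₀`, is a constant projection
    set Q := evolConj Φ t₁ (P t₁) t₀
    have hQ : ∀ t ∈ I, evolConj Φ t₀ Q t = P t := fun t ht =>
      hP.evolConj_evolConj_eq hΦ hIJ ht₀ ht₁ ht
    have hQidem : IsIdempotentElem Q := isIdempotentElem_evolConj hΦ (hIJ ht₁) ht₀ (hP.1 t₁ ht₁)
    obtain ⟨hstable, hunstable⟩ := hP.norm_mul_apply_le hΦ hIJ ht₀ hQidem hQ
    refine ⟨Q, hQidem.eq, K, by positivity, K, by positivity, K, by positivity, α, hα,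
      hstable, hunstable, fun t ht => ?_⟩
    rw [← evolConj, hQ t ht]
    exact hP.norm_le ht (hpos t ht).ne' (hΦ.1 t (hIJ ht))
  · rintro ⟨P, hP, K₁, hK₁, K₂, hK₂, M, -, α, hα, hstable, hunstable, hbdd⟩
    exact ⟨max 1 (max (K₁ * M) (K₂ * (1 + M))), le_max_left _ _, α, hα, evolConj Φ t₀ P,
      hasUHDWith_evolConj hΦ hIJ hpos ht₀ hP hK₁.le hK₂.le
        ((le_max_left _ _).trans (le_max_right _ _)) ((le_max_right _ _).trans (le_max_right _ _))
        hstable hunstable hbdd⟩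

/-- `Φ` has a uniform `h`-dichotomy on `I` iff there are a constant
projection `P` and positive constants `K₁, K₂, M, α` such that for every `ξ`:
(a) `|Φ(t,t₀)Pξ| ≤ K₁ (h t / h s)^{-α} |Φ(s,t₀)Pξ|` for `t ≥ s` in `I`;
(b) `|Φ(t,t₀)(I-P)ξ| ≤ K₂ (h s / h t)^{-α} |Φ(s,t₀)(I-P)ξ|` for `t ≤ s` in `I`;
(c) `‖Φ(t,t₀) P Φ(t₀,t)‖ ≤ M` for `t ∈ I`. -/
theorem statement7 {J I : Set ℝ} {h hinv : ℝ → ℝ} (hgr : GrowthRate J h hinv)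
    (hIJ : I ⊆ J) (hIc : I.OrdConnected)
    {E : Type*} [NormedAddCommGroup E] [NormedSpace ℝ E] [FiniteDimensional ℝ E]
    (Φ : ℝ → ℝ → (E →L[ℝ] E)) (hΦ : IsEvolutionFamily J Φ)
    (t₀ : ℝ) (ht₀ : t₀ ∈ J) :
    HasUHD I h Φ ↔
      ∃ P : E →L[ℝ] E, P * P = P ∧ ∃ K₁ > (0:ℝ), ∃ K₂ > (0:ℝ), ∃ M > (0:ℝ), ∃ α > (0:ℝ),
        (∀ ξ : E, ∀ s ∈ I, ∀ t ∈ I, s ≤ t →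
          ‖(Φ t t₀ * P) ξ‖ ≤ K₁ * (h t / h s) ^ (-α) * ‖(Φ s t₀ * P) ξ‖) ∧
        (∀ ξ : E, ∀ s ∈ I, ∀ t ∈ I, t ≤ s →
          ‖(Φ t t₀ * (1 - P)) ξ‖ ≤ K₂ * (h s / h t) ^ (-α) * ‖(Φ s t₀ * (1 - P)) ξ‖) ∧
        (∀ t ∈ I, ‖Φ t t₀ * P * Φ t₀ t‖ ≤ M) :=
  statement7_general hgr hIJ Φ hΦ t₀ ht₀
end
end
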